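/- arXiv:1812.06588 — 4 statements merged into one kernel-verified Lean document; each statement's English description precedes it below -/
import Mathlib

section
/- Let μ ≥ 0, ν² ≥ 0 with δ := (μ-1)² - 4ν² ≥ 0, and let n ≥ 1. Define V(t,x) := (1+t)^{(μ+1+√δ)/2}·((1+t)² - |x|²)^{-(n+√δ)/2} on the region Q := {(t,x) ∈ [0,∞)×ℝⁿ : |x| < 1+t}. Then for every x ∈ ℝⁿ with |x| < 1, μ·V(0,x) - ∂ₜV(0,x) = (1-|x|²)^{-(n+√δ)/2 - 1}·( n + (μ-1+√δ)/2 + ((1-μ+√δ)/2)·|x|² ), and in particular μ·V(0,x) - ∂ₜV(0,x) ≥ 0 for all |x| < 1. -/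
/-
At `t = 0` the derivative of `V = (1+t)^a ((1+t)^2 - |x|^2)^b` is `a P^b + 2b P^(b-1)` with
`P = 1 - |x|^2`, so `μ V - ∂ₜV = P^(b-1) ((μ - a) P - 2b)`, which is the stated closed form. Its
second factor is affine in `|x|^2`, equal to `n + (μ - 1 + √δ)/2 > 0` at `|x| = 0` and to `n + √δ`
at `|x| = 1`, hence nonnegative on the unit ball.
-/

open Real

theorem hasDerivAt_one_add_rpow_mul_sq_sub_rpow {a b c t : ℝ} (ht : 1 + t ≠ 0)
    (hc : (1 + t) ^ 2 - c ≠ 0) :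
    HasDerivAt (fun t : ℝ => (1 + t) ^ a * ((1 + t) ^ 2 - c) ^ b)
      (a * (1 + t) ^ (a - 1) * ((1 + t) ^ 2 - c) ^ b
        + (1 + t) ^ a * (b * ((1 + t) ^ 2 - c) ^ (b - 1) * (2 * (1 + t)))) t := by
  have hlin : HasDerivAt (fun t : ℝ => 1 + t) 1 t := (hasDerivAt_id t).const_add 1
  have hsq : HasDerivAt (fun t : ℝ => (1 + t) ^ 2 - c) (2 * (1 + t)) t := by
    simpa using (hlin.pow 2).sub_const c
  exact ((hlin.rpow_const (p := a) (Or.inl ht)).fun_mul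
    (hsq.rpow_const (p := b) (Or.inl hc))).congr_deriv (by ring)

theorem deriv_one_add_rpow_mul_sq_sub_rpow_zero (a b c : ℝ) (hc : c ≠ 1) :
    deriv (fun t : ℝ => (1 + t) ^ a * ((1 + t) ^ 2 - c) ^ b) 0
      = a * (1 - c) ^ b + 2 * b * (1 - c) ^ (b - 1) := by
  have h := (hasDerivAt_one_add_rpow_mul_sq_sub_rpow (a := a) (b := b) (t := 0)
    (by norm_num) (by norm_num; exact sub_ne_zero.2 hc.symm)).deriv
  rw [h]
  simp only [add_zero, one_pow, one_rpow, one_mul, mul_one]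
  ring

theorem mul_rpow_sub_deriv_eq {P : ℝ} (hP : 0 < P) (μ a b : ℝ) :
    μ * P ^ b - (a * P ^ b + 2 * b * P ^ (b - 1)) = P ^ (b - 1) * ((μ - a) * P - 2 * b) := by
  have hsplit : P ^ b = P ^ (b - 1) * P := by
    rw [← rpow_add_one hP.ne', sub_add_cancel]
  rw [hsplit]
  ring

theorem affine_sq_nonneg {n μ s r : ℝ} (hn : 1 ≤ n) (hμ : 0 ≤ μ) (hs : 0 ≤ s) (hr : r ^ 2 ≤ 1) :
    0 ≤ n + (μ - 1 + s) / 2 + (1 - μ + s) / 2 * r ^ 2 := by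
  have hconvex : n + (μ - 1 + s) / 2 + (1 - μ + s) / 2 * r ^ 2
      = (1 - r ^ 2) * (n + (μ - 1 + s) / 2) + r ^ 2 * (n + s) := by ring
  rw [hconvex]
  have hcentre : 0 ≤ n + (μ - 1 + s) / 2 := by linarith
  positivity [sub_nonneg.2 hr, hcentre]

theorem stmt_14_general (n : ℕ) (hn : 1 ≤ n) (μ : ℝ) (hμ : 0 ≤ μ)
    (δ : ℝ)
    (V : ℝ → EuclideanSpace ℝ (Fin n) → ℝ)
    (hV : ∀ t : ℝ, ∀ x : EuclideanSpace ℝ (Fin n), -1 < t → ‖x‖ < 1 + t →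
      V t x = (1 + t) ^ ((μ + 1 + Real.sqrt δ) / 2)
        * ((1 + t)^2 - ‖x‖^2) ^ (-((n : ℝ) + Real.sqrt δ) / 2)) :
    ∀ x : EuclideanSpace ℝ (Fin n), ‖x‖ < 1 →
      (μ * V 0 x - deriv (fun t => V t x) 0
          = (1 - ‖x‖^2) ^ (-((n : ℝ) + Real.sqrt δ) / 2 - 1)
            * ((n : ℝ) + (μ - 1 + Real.sqrt δ) / 2
                + ((1 - μ + Real.sqrt δ) / 2) * ‖x‖^2))
      ∧ 0 ≤ μ * V 0 x - deriv (fun t => V t x) 0 := by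
  intro x hx
  have hr : ‖x‖ ^ 2 < 1 := by nlinarith [norm_nonneg x]
  have hV_near : (fun t => V t x) =ᶠ[nhds 0] fun t =>
      (1 + t) ^ ((μ + 1 + √δ) / 2) * ((1 + t) ^ 2 - ‖x‖ ^ 2) ^ (-((n : ℝ) + √δ) / 2) := by
    filter_upwards [Ioo_mem_nhds (a := ‖x‖ - 1) (by linarith) one_pos] with t ht
    exact hV t x (by linarith [ht.1, norm_nonneg x]) (by linarith [ht.1])
  have hV0 : V 0 x = (1 - ‖x‖ ^ 2) ^ (-((n : ℝ) + √δ) / 2) := by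
    simpa using hV 0 x (by norm_num) (by simpa using hx)
  have key : μ * V 0 x - deriv (fun t => V t x) 0
      = (1 - ‖x‖ ^ 2) ^ (-((n : ℝ) + √δ) / 2 - 1)
        * ((n : ℝ) + (μ - 1 + √δ) / 2 + ((1 - μ + √δ) / 2) * ‖x‖ ^ 2) := by
    rw [hV0, hV_near.deriv_eq, deriv_one_add_rpow_mul_sq_sub_rpow_zero _ _ _ hr.ne,
      mul_rpow_sub_deriv_eq (sub_pos.2 hr)]
    ring_nf
  refine ⟨key, key ▸ mul_nonneg (rpow_nonneg (sub_pos.2 hr).le _) ?_⟩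
  exact affine_sq_nonneg (by exact_mod_cast hn) hμ (sqrt_nonneg δ) hr.le

theorem stmt_14 (n : ℕ) (hn : 1 ≤ n) (μ ν2 : ℝ) (hμ : 0 ≤ μ) (hν : 0 ≤ ν2)
    (δ : ℝ) (hδdef : δ = (μ - 1)^2 - 4 * ν2) (hδ : 0 ≤ δ)
    (V : ℝ → EuclideanSpace ℝ (Fin n) → ℝ)
    (hV : ∀ t : ℝ, ∀ x : EuclideanSpace ℝ (Fin n), -1 < t → ‖x‖ < 1 + t →
      V t x = (1 + t) ^ ((μ + 1 + Real.sqrt δ) / 2)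
        * ((1 + t)^2 - ‖x‖^2) ^ (-((n : ℝ) + Real.sqrt δ) / 2)) :
    ∀ x : EuclideanSpace ℝ (Fin n), ‖x‖ < 1 →
      (μ * V 0 x - deriv (fun t => V t x) 0
          = (1 - ‖x‖^2) ^ (-((n : ℝ) + Real.sqrt δ) / 2 - 1)
            * ((n : ℝ) + (μ - 1 + Real.sqrt δ) / 2
                + ((1 - μ + Real.sqrt δ) / 2) * ‖x‖^2))
      ∧ 0 ≤ μ * V 0 x - deriv (fun t => V t x) 0 :=
  stmt_14_general n hn μ hμ δ V hV
end

section
/- Let μ ≥ 0, ν² ≥ 0 with δ := (μ-1)² - 4ν² ≥ 0, and n ≥ 1. Define V(t,x) := (1+t)^{(μ+1+√δ)/2}·((1+t)² - |x|²)^{-(n+√δ)/2} for |x| < 1+t. Then V solves the adjoint equation ∂ₜ²V - ΔV - ∂ₜ(μ/(1+t)·V) + (ν²/(1+t)²)·V = 0 on the interior of the light cone {(t,x) : t > 0, |x| < 1+t}. -/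
/-!
Write `T = 1 + t`, `W = T² - ‖x‖²` and `V = T ^ a * W ^ (-b)` with `a = (μ + 1 + √δ) / 2`,
`b = (n + √δ) / 2`. Every derivative in the equation is `V` times a rational function of `T`
and `W`: `∂ₜV = V (a / T - 2 b T / W)`, and, `V` being radial in `x`,
`ΔV = V (2 b n / W + 4 b (b + 1) ‖x‖² / W²)`. Divided by `V`, the equation becomes a rational
identity: its `W⁻¹` part cancels because `2a - μ - 2b = 1 - n`, and its `T⁻²` part is
`(a - 1)(a - μ) + ν² = (δ - (μ - 1)² + 4ν²) / 4 = 0`.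
-/

/-- The Laplacian of `f : ℝⁿ → ℝ` at `x`, as the sum of second partial
derivatives in the coordinate directions. -/
noncomputable def euclideanLaplacian (n : ℕ) (f : EuclideanSpace ℝ (Fin n) → ℝ)
    (x : EuclideanSpace ℝ (Fin n)) : ℝ :=
  ∑ i : Fin n,
    fderiv ℝ (fun y => fderiv ℝ f y (EuclideanSpace.single i 1)) x
      (EuclideanSpace.single i 1)

open Filter Topology

theorem HasDerivAt.rpow_const_of_pos {f : ℝ → ℝ} {f' x : ℝ} (p : ℝ) (hf : HasDerivAt f f' x)
    (hx : 0 < f x) : HasDerivAt (fun y => f y ^ p) (f x ^ p * (p * f' / f x)) x := by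
  convert hf.rpow_const (p := p) (Or.inl hx.ne') using 1
  rw [Real.rpow_sub_one hx.ne']
  ring

section Laplacian

variable {n : ℕ}

theorem euclideanLaplacian_congr {f g : EuclideanSpace ℝ (Fin n) → ℝ}
    {x : EuclideanSpace ℝ (Fin n)} (h : f =ᶠ[𝓝 x] g) :
    euclideanLaplacian n f x = euclideanLaplacian n g x := by
  refine Finset.sum_congr rfl fun i _ => ?_
  have hpartial : (fun y => fderiv ℝ f y (EuclideanSpace.single i 1))
      =ᶠ[𝓝 x] fun y => fderiv ℝ g y (EuclideanSpace.single i 1) :=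
    (h.fderiv (𝕜 := ℝ)).mono fun y hy => by simp only [hy]
  rw [hpartial.fderiv_eq]

theorem euclideanLaplacian_comp_norm_sq {φ φ' : ℝ → ℝ} {φ'' : ℝ} {x : EuclideanSpace ℝ (Fin n)}
    (hφ : ∀ᶠ r in 𝓝 (‖x‖ ^ 2), HasDerivAt φ (φ' r) r)
    (hφ' : HasDerivAt φ' φ'' (‖x‖ ^ 2)) :
    euclideanLaplacian n (fun y => φ (‖y‖ ^ 2)) x
      = 2 * n * φ' (‖x‖ ^ 2) + 4 * ‖x‖ ^ 2 * φ'' := by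
  have hnormSq (y : EuclideanSpace ℝ (Fin n)) :
      HasFDerivAt (fun y => ‖y‖ ^ 2) (2 • innerSL ℝ y) y :=
    (hasStrictFDerivAt_norm_sq y).hasFDerivAt
  have hinner (y : EuclideanSpace ℝ (Fin n)) (i : Fin n) :
      innerSL ℝ y (EuclideanSpace.single i 1) = y i := by
    simp [EuclideanSpace.inner_single_right]
  have hpartial (i : Fin n) :
      (fun y => fderiv ℝ (fun y => φ (‖y‖ ^ 2)) y (EuclideanSpace.single i 1))
        =ᶠ[𝓝 x] fun y => φ' (‖y‖ ^ 2) * (2 * y i) := by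
    have hcont : Continuous fun y : EuclideanSpace ℝ (Fin n) => ‖y‖ ^ 2 := by fun_prop
    filter_upwards [(hcont.tendsto x).eventually hφ] with y hy
    have hfy : HasFDerivAt (fun y => φ (‖y‖ ^ 2)) (φ' (‖y‖ ^ 2) • 2 • innerSL ℝ y) y :=
      hy.comp_hasFDerivAt y (hnormSq y)
    simp [hfy.fderiv, hinner]
  have hsecond (i : Fin n) : fderiv ℝ (fun y => φ' (‖y‖ ^ 2) * (2 * y i)) x
      (EuclideanSpace.single i 1) = 4 * φ'' * x i ^ 2 + 2 * φ' (‖x‖ ^ 2) := by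
    have hproj : HasFDerivAt (fun y : EuclideanSpace ℝ (Fin n) => 2 * y i)
        ((2 : ℝ) • EuclideanSpace.proj i) x :=
      ((EuclideanSpace.proj (𝕜 := ℝ) i).hasFDerivAt (x := x)).const_mul 2
    have hφ'x : HasFDerivAt (fun y => φ' (‖y‖ ^ 2)) (φ'' • 2 • innerSL ℝ x) x :=
      hφ'.comp_hasFDerivAt x (hnormSq x)
    rw [(hφ'x.fun_mul hproj).fderiv]
    simp [hinner]
    ring
  rw [euclideanLaplacian, Finset.sum_congr rfl fun i _ => by rw [(hpartial i).fderiv_eq, hsecond i],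
    Finset.sum_add_distrib, ← Finset.mul_sum, EuclideanSpace.real_norm_sq_eq]
  simp
  ring

end Laplacian


noncomputable def conePower {E : Type*} [NormedAddCommGroup E] (a b t : ℝ) (x : E) : ℝ :=
  (1 + t) ^ a * ((1 + t) ^ 2 - ‖x‖ ^ 2) ^ (-b)

section ConePower

variable {E : Type*} [NormedAddCommGroup E] (a b : ℝ) {t : ℝ} {x : E}

theorem hasDerivAt_conePower_time (hx : ‖x‖ < 1 + t) :
    HasDerivAt (fun s => conePower a b s x)
      (conePower a b t x * (a / (1 + t) - 2 * b * (1 + t) / ((1 + t) ^ 2 - ‖x‖ ^ 2))) t := by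
  have hT : 0 < 1 + t := (norm_nonneg x).trans_lt hx
  have hW : 0 < (1 + t) ^ 2 - ‖x‖ ^ 2 := by nlinarith [norm_nonneg x]
  have hshift : HasDerivAt (fun s : ℝ => 1 + s) 1 t := (hasDerivAt_id' t).const_add 1
  have hTa := hshift.rpow_const_of_pos a hT
  have hWb := ((hshift.fun_pow 2).sub_const (‖x‖ ^ 2)).rpow_const_of_pos (-b) hW
  refine (hTa.fun_mul hWb).congr_deriv ?_
  simp only [conePower]
  field_simp
  ring

theorem deriv_deriv_conePower_time (hx : ‖x‖ < 1 + t) :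
    deriv (deriv fun s => conePower a b s x) t
      = conePower a b t x * ((a / (1 + t) - 2 * b * (1 + t) / ((1 + t) ^ 2 - ‖x‖ ^ 2)) ^ 2
          - a / (1 + t) ^ 2
          + 2 * b * ((1 + t) ^ 2 + ‖x‖ ^ 2) / ((1 + t) ^ 2 - ‖x‖ ^ 2) ^ 2) := by
  have hT : 0 < 1 + t := (norm_nonneg x).trans_lt hx
  have hW : 0 < (1 + t) ^ 2 - ‖x‖ ^ 2 := by nlinarith [norm_nonneg x]
  have hderiv : deriv (fun s => conePower a b s x) =ᶠ[𝓝 t] fun s =>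
      conePower a b s x * (a / (1 + s) - 2 * b * (1 + s) / ((1 + s) ^ 2 - ‖x‖ ^ 2)) := by
    filter_upwards [eventually_gt_nhds (show ‖x‖ - 1 < t by linarith)] with s hs
    exact (hasDerivAt_conePower_time a b (by linarith)).deriv
  have hshift : HasDerivAt (fun s : ℝ => 1 + s) 1 t := (hasDerivAt_id' t).const_add 1
  have hlog := ((hasDerivAt_const t a).fun_div hshift hT.ne').fun_sub
    (((hshift.const_mul (2 * b)).fun_div ((hshift.fun_pow 2).sub_const (‖x‖ ^ 2)) hW.ne'))
  rw [hderiv.deriv_eq, ((hasDerivAt_conePower_time a b hx).fun_mul hlog).deriv]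
  field_simp
  ring

end ConePower

theorem euclideanLaplacian_conePower (a b : ℝ) {t : ℝ} {n : ℕ} {x : EuclideanSpace ℝ (Fin n)}
    (hx : ‖x‖ < 1 + t) :
    euclideanLaplacian n (conePower a b t) x
      = conePower a b t x * (2 * b * n / ((1 + t) ^ 2 - ‖x‖ ^ 2)
          + 4 * b * (b + 1) * ‖x‖ ^ 2 / ((1 + t) ^ 2 - ‖x‖ ^ 2) ^ 2) := by
  set φ : ℝ → ℝ := fun r => (1 + t) ^ a * ((1 + t) ^ 2 - r) ^ (-b)
  have hφ {r : ℝ} (hr : r < (1 + t) ^ 2) :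
      HasDerivAt φ (φ r * (b / ((1 + t) ^ 2 - r))) r := by
    refine ((((hasDerivAt_id' r).const_sub ((1 + t) ^ 2)).rpow_const_of_pos (-b)
      (sub_pos.2 hr)).const_mul ((1 + t) ^ a)).congr_deriv ?_
    simp only [φ]
    ring
  have hW : ‖x‖ ^ 2 < (1 + t) ^ 2 := by nlinarith [norm_nonneg x]
  have hφ' := (hφ hW).fun_mul ((hasDerivAt_const _ b).fun_div
    ((hasDerivAt_id' _).const_sub ((1 + t) ^ 2)) (sub_pos.2 hW).ne')
  rw [show conePower a b t = fun y => φ (‖y‖ ^ 2) from rfl,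
    euclideanLaplacian_comp_norm_sq (φ' := fun r => φ r * (b / ((1 + t) ^ 2 - r)))
      ((eventually_lt_nhds hW).mono fun r hr => hφ hr) hφ']
  simp only [φ]
  field_simp
  ring

theorem stmt_15_general (n : ℕ) (μ ν2 : ℝ)
    (δ : ℝ) (hδdef : δ = (μ - 1)^2 - 4 * ν2) (hδ : 0 ≤ δ)
    (V : ℝ → EuclideanSpace ℝ (Fin n) → ℝ)
    (hV : ∀ t : ℝ, ∀ x : EuclideanSpace ℝ (Fin n), -1 < t → ‖x‖ < 1 + t →
      V t x = (1 + t) ^ ((μ + 1 + Real.sqrt δ) / 2)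
        * ((1 + t)^2 - ‖x‖^2) ^ (-((n : ℝ) + Real.sqrt δ) / 2)) :
    ∀ t : ℝ, ∀ x : EuclideanSpace ℝ (Fin n), 0 < t → ‖x‖ < 1 + t →
      deriv (fun s => deriv (fun r => V r x) s) t
        - euclideanLaplacian n (fun y => V t y) x
        - deriv (fun s => (μ / (1 + s)) * V s x) t
        + (ν2 / (1 + t)^2) * V t x = 0 := by
  intro t x _ hx
  set a := (μ + 1 + √δ) / 2
  set b := ((n : ℝ) + √δ) / 2
  have hVeq {r : ℝ} {y : EuclideanSpace ℝ (Fin n)} (hy : ‖y‖ < 1 + r) :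
      V r y = conePower a b r y := by
    rw [hV r y (by linarith [norm_nonneg y]) hy, conePower, neg_div]
  have hnear_t : (fun r => V r x) =ᶠ[𝓝 t] fun r => conePower a b r x := by
    filter_upwards [eventually_gt_nhds (show ‖x‖ - 1 < t by linarith)] with r hr
    exact hVeq (by linarith)
  have hnear_x : (fun y => V t y) =ᶠ[𝓝 x] conePower a b t :=
    ((continuous_norm.tendsto x).eventually (eventually_lt_nhds hx)).mono fun y hy => hVeq hy
  have hT : 0 < 1 + t := by linarith
  have hdamping := ((hasDerivAt_const t μ).fun_div ((hasDerivAt_id' t).const_add 1) hT.ne').fun_mul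
    (hasDerivAt_conePower_time a b hx)
  have hdamping_near : (fun s => μ / (1 + s) * V s x) =ᶠ[𝓝 t]
      fun s => μ / (1 + s) * conePower a b s x := hnear_t.mono fun r hr => by simp only [hr]
  rw [hnear_t.deriv.deriv_eq, euclideanLaplacian_congr hnear_x, hdamping_near.deriv_eq, hdamping.deriv, hVeq hx,
    deriv_deriv_conePower_time a b hx, euclideanLaplacian_conePower a b hx]
  have hs : √δ ^ 2 = (μ - 1) ^ 2 - 4 * ν2 := by rw [Real.sq_sqrt hδ, hδdef]
  have hW : (1 + t) ^ 2 - ‖x‖ ^ 2 ≠ 0 := by nlinarith [norm_nonneg x]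
  generalize conePower a b t x = C
  simp only [a, b]
  field_simp
  linear_combination (C * ((1 + t) ^ 2 - ‖x‖ ^ 2) ^ 2) * hs

theorem stmt_15 (n : ℕ) (hn : 1 ≤ n) (μ ν2 : ℝ) (hμ : 0 ≤ μ) (hν : 0 ≤ ν2)
    (δ : ℝ) (hδdef : δ = (μ - 1)^2 - 4 * ν2) (hδ : 0 ≤ δ)
    (V : ℝ → EuclideanSpace ℝ (Fin n) → ℝ)
    (hV : ∀ t : ℝ, ∀ x : EuclideanSpace ℝ (Fin n), -1 < t → ‖x‖ < 1 + t →
      V t x = (1 + t) ^ ((μ + 1 + Real.sqrt δ) / 2)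
        * ((1 + t)^2 - ‖x‖^2) ^ (-((n : ℝ) + Real.sqrt δ) / 2)) :
    ∀ t : ℝ, ∀ x : EuclideanSpace ℝ (Fin n), 0 < t → ‖x‖ < 1 + t →
      deriv (fun s => deriv (fun r => V r x) s) t
        - euclideanLaplacian n (fun y => V t y) x
        - deriv (fun s => (μ / (1 + s)) * V s x) t
        + (ν2 / (1 + t)^2) * V t x = 0 :=
  stmt_15_general n μ ν2 δ hδdef hδ V hV
end

section
/- Let n ≥ 1, μ ∈ ℝ, p > 1, and let β > (n-μ+1)/2 + 1 - 1/p. Let r₀ ∈ (0,1) and p' := p/(p-1). Then there exists a constant C > 0 such that for all R ≥ 2, ∫_{R/2}^{R} (1+t)^{-((n-μ-1)/2)p'} (r₀+t)^{n-1} ( ∫_0^{r₀+t} (1+t-r)^{((n-μ+1)/2 - β)p'} dr ) dt ≤ C · R^{-((n-μ-1)/2)p' + n}. -/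
/-!
With `c := ((n-μ+1)/2 - β) p'`, the hypothesis on `β` says exactly `c < -1`, so the inner integral
is at most `∫_{1-r₀}^∞ u^c du`, uniformly in `t`. For `t ∈ [R/2, R]` both `1 + t` and `r₀ + t` lie
in `[R/2, 3R/2]`, so with `e := -((n-μ-1)/2) p'` the integrand is `O(R^{e+n-1})`, and integrating
over an interval of length `R/2` gives `O(R^{e+n})`.
-/

open Set

lemma mul_div_sub_one_lt_neg_one {γ p : ℝ} (hp : 1 < p) (hγ : γ < 1 / p - 1) :
    γ * (p / (p - 1)) < -1 := by
  have hp1 : p - 1 ≠ 0 := by linarith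
  have hp0 : p ≠ 0 := by linarith
  have hp' : 0 < p / (p - 1) := div_pos (by linarith) (by linarith)
  calc γ * (p / (p - 1)) < (1 / p - 1) * (p / (p - 1)) := mul_lt_mul_of_pos_right hγ hp'
    _ = -1 := by field_simp; ring

lemma rpow_le_max_mul_rpow {x R a b : ℝ} (s : ℝ) (ha : 0 < a) (hR : 0 < R)
    (hax : a * R ≤ x) (hxb : x ≤ b * R) : x ^ s ≤ max (a ^ s) (b ^ s) * R ^ s := by
  have hxR : 0 ≤ x / R := div_nonneg ((mul_pos ha hR).le.trans hax) hR.le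
  rw [← div_mul_cancel₀ x hR.ne', Real.mul_rpow hxR hR.le]
  refine mul_le_mul_of_nonneg_right ?_ (Real.rpow_nonneg hR.le s)
  have hlo : a ≤ x / R := (le_div_iff₀ hR).2 hax
  have hhi : x / R ≤ b := (div_le_iff₀ hR).2 hxb
  rcases le_total 0 s with hs | hs
  · exact le_max_of_le_right (Real.rpow_le_rpow hxR hhi hs)
  · exact le_max_of_le_left (Real.rpow_le_rpow_of_nonpos ha hlo hs)

lemma integral_rpow_le_of_lt_neg_one {a b c : ℝ} (ha : 0 < a) (hab : a ≤ b) (hc : c < -1) :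
    ∫ u in a..b, u ^ c ≤ a ^ (c + 1) / -(c + 1) := by
  rw [integral_rpow (Or.inr ⟨by linarith, notMem_uIcc_of_lt ha (ha.trans_le hab)⟩),
    ← neg_div_neg_eq, neg_sub]
  have hb : 0 ≤ b ^ (c + 1) := Real.rpow_nonneg (ha.le.trans hab) _
  exact div_le_div_of_nonneg_right (by linarith) (by linarith)

lemma integral_one_add_sub_rpow_le {r₀ t c : ℝ} (hr₀ : r₀ < 1) (ht : 0 ≤ r₀ + t) (hc : c < -1) :
    ∫ r in (0 : ℝ)..(r₀ + t), (1 + t - r) ^ c ≤ (1 - r₀) ^ (c + 1) / -(c + 1) := by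
  have hsub : ∫ r in (0 : ℝ)..(r₀ + t), (1 + t - r) ^ c = ∫ u in (1 - r₀)..(1 + t), u ^ c := by
    rw [intervalIntegral.integral_comp_sub_left (fun u ↦ u ^ c) (1 + t)]
    congr 1 <;> ring
  rw [hsub]
  exact integral_rpow_le_of_lt_neg_one (by linarith) (by linarith) hc

lemma integral_one_add_sub_rpow_nonneg {r₀ t c : ℝ} (hr₀ : r₀ < 1) (ht : 0 ≤ r₀ + t) :
    0 ≤ ∫ r in (0 : ℝ)..(r₀ + t), (1 + t - r) ^ c :=
  intervalIntegral.integral_nonneg ht fun r hr ↦ Real.rpow_nonneg (by linarith [hr.2]) c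

lemma norm_integrand_le {e s c r₀ R t : ℝ} (hc : c < -1) (hr₀ : r₀ ∈ Ioo 0 1) (hR : 2 ≤ R)
    (ht : t ∈ Icc (R / 2) R) :
    ‖(1 + t) ^ e * (r₀ + t) ^ s * ∫ r in (0 : ℝ)..(r₀ + t), (1 + t - r) ^ c‖ ≤
      max ((1 / 2) ^ e) ((3 / 2) ^ e) * max ((1 / 2) ^ s) ((3 / 2) ^ s) *
        ((1 - r₀) ^ (c + 1) / -(c + 1)) * R ^ (e + s) := by
  obtain ⟨hr₀0, hr₀1⟩ := hr₀
  obtain ⟨htlo, hthi⟩ := ht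
  have hRpos : 0 < R := by linarith
  have hinner := integral_one_add_sub_rpow_nonneg (c := c) hr₀1 (by linarith : 0 ≤ r₀ + t)
  have h1 : (1 + t) ^ e ≤ max ((1 / 2) ^ e) ((3 / 2) ^ e) * R ^ e :=
    rpow_le_max_mul_rpow e (by norm_num) hRpos (by linarith) (by linarith)
  have h2 : (r₀ + t) ^ s ≤ max ((1 / 2) ^ s) ((3 / 2) ^ s) * R ^ s :=
    rpow_le_max_mul_rpow s (by norm_num) hRpos (by linarith) (by linarith)
  have h3 := integral_one_add_sub_rpow_le (t := t) hr₀1 (by linarith) hc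
  have hA : 0 ≤ (1 + t) ^ e := Real.rpow_nonneg (by linarith) e
  have hB : 0 ≤ (r₀ + t) ^ s := Real.rpow_nonneg (by linarith) s
  rw [Real.norm_of_nonneg (by positivity), Real.rpow_add hRpos]
  calc _ ≤ max ((1 / 2) ^ e) ((3 / 2) ^ e) * R ^ e * (max ((1 / 2) ^ s) ((3 / 2) ^ s) * R ^ s) *
          ((1 - r₀) ^ (c + 1) / -(c + 1)) := by gcongr
    _ = _ := by ring

theorem stmt_16_general (n μ p β r₀ : ℝ) (hp : 1 < p)
    (hβ : (n - μ + 1) / 2 + 1 - 1 / p < β) (hr₀ : r₀ ∈ Set.Ioo (0 : ℝ) 1)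
    (p' : ℝ) (hp' : p' = p / (p - 1)) :
    ∃ C : ℝ, 0 < C ∧ ∀ R : ℝ, 2 ≤ R →
      (∫ t in (R / 2)..R,
          (1 + t) ^ (-((n - μ - 1) / 2) * p') * (r₀ + t) ^ (n - 1)
            * ∫ r in (0:ℝ)..(r₀ + t), (1 + t - r) ^ (((n - μ + 1) / 2 - β) * p'))
        ≤ C * R ^ (-((n - μ - 1) / 2) * p' + n) := by
  subst hp'
  set e := -((n - μ - 1) / 2) * (p / (p - 1))
  set c := ((n - μ + 1) / 2 - β) * (p / (p - 1))
  have hc : c < -1 := mul_div_sub_one_lt_neg_one hp (by linarith)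
  set M := max ((1 / 2 : ℝ) ^ e) ((3 / 2) ^ e) * max ((1 / 2 : ℝ) ^ (n - 1)) ((3 / 2) ^ (n - 1)) *
    ((1 - r₀) ^ (c + 1) / -(c + 1))
  have hM : 0 < M := by
    have h1 : 0 < (1 - r₀) ^ (c + 1) := Real.rpow_pos_of_pos (sub_pos.2 hr₀.2) _
    exact mul_pos (mul_pos (lt_max_of_lt_left (by positivity)) (lt_max_of_lt_left (by positivity)))
      (div_pos h1 (by linarith))
  refine ⟨M / 2, by positivity, fun R hR ↦ ?_⟩
  have hRpos : 0 < R := by linarith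
  calc _ ≤ ‖∫ t in (R / 2)..R, (1 + t) ^ e * (r₀ + t) ^ (n - 1)
          * ∫ r in (0:ℝ)..(r₀ + t), (1 + t - r) ^ c‖ := Real.le_norm_self _
    _ ≤ M * R ^ (e + (n - 1)) * |R - R / 2| :=
        intervalIntegral.norm_integral_le_of_norm_le_const fun t ht ↦ norm_integrand_le hc hr₀ hR
          (Ioc_subset_Icc_self (by rwa [uIoc_of_le (by linarith)] at ht))
    _ = M / 2 * R ^ (e + n) := by
        rw [abs_of_pos (by linarith), show e + n = e + (n - 1) + 1 by ring,
          Real.rpow_add_one hRpos.ne']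
        ring

theorem stmt_16 (n μ p β r₀ : ℝ) (hn : 1 ≤ n) (hp : 1 < p)
    (hβ : (n - μ + 1) / 2 + 1 - 1 / p < β) (hr₀ : r₀ ∈ Set.Ioo (0 : ℝ) 1)
    (p' : ℝ) (hp' : p' = p / (p - 1)) :
    ∃ C : ℝ, 0 < C ∧ ∀ R : ℝ, 2 ≤ R →
      (∫ t in (R / 2)..R,
          (1 + t) ^ (-((n - μ - 1) / 2) * p') * (r₀ + t) ^ (n - 1)
            * ∫ r in (0:ℝ)..(r₀ + t), (1 + t - r) ^ (((n - μ + 1) / 2 - β) * p'))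
        ≤ C * R ^ (-((n - μ - 1) / 2) * p' + n) :=
  stmt_16_general n μ p β r₀ hp hβ hr₀ p' hp'
end

section
/- Let T > 2, R₀ ∈ (2,T), and let y ∈ C¹([R₀,T)) be nonnegative. Suppose there exist θ, K₁, K₂ > 0 and p₁ > 1, p₂ ≥ 1 with p₂ < p₁ + 1 such that R·y'(R) ≥ K₁θ and R·(log R)^{p₂-1}·y'(R) ≥ K₂·(y(R))^{p₁} for all R ∈ (R₀,T). Then there exist θ₀ > 0 and K > 0 (depending only on R₀, K₁, K₂, p₁, p₂) such that for all θ ∈ (0,θ₀), T ≤ exp( K·θ^{-(p₁-1)/(p₁-p₂+1)} ). -/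
/-!
Suppose `exp (2 L) < T` for `L = s θ ^ (-α)`, where `q = p₁ - p₂ + 1` and `α = (p₁ - 1) / q`.
Integrating the first inequality from `R₀` gives `y ≥ K₁ θ (log R - log R₀) ≥ K₁ θ L / 2` on
`[e ^ L, e ^ (2 L)]` as soon as `2 log R₀ ≤ L`. There `log R ≤ 2 L`, so the second inequality yields
`R y' ≥ K₂ (2 L) ^ (1 - p₂) y ^ p₁`, and integrating `y' / y ^ p₁` over `[e ^ L, e ^ (2 L)]` gives
`K₂ (2 L) ^ (1 - p₂) L ≤ (p₁ - 1)⁻¹ (K₁ θ L / 2) ^ (1 - p₁)`. This is `c₀ (L θ ^ α) ^ q ≤ 1`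
with `c₀ = (p₁ - 1) K₂ 2 ^ (1 - p₂) (K₁ / 2) ^ (p₁ - 1)`, i.e. `c₀ s ^ q ≤ 1`, which fails once `s`
is large.
-/

open Real Set Filter

lemma sub_le_sub_of_hasDerivAt_le {f g f' g' : ℝ → ℝ} {a b : ℝ} (hab : a ≤ b)
    (hf : ∀ x ∈ Icc a b, HasDerivAt f (f' x) x) (hg : ∀ x ∈ Icc a b, HasDerivAt g (g' x) x)
    (hle : ∀ x ∈ Ioo a b, g' x ≤ f' x) : g b - g a ≤ f b - f a := by
  have hderiv : ∀ x ∈ Icc a b, HasDerivAt (f - g) (f' x - g' x) x :=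
    fun x hx => (hf x hx).sub (hg x hx)
  have hmono : MonotoneOn (f - g) (Icc a b) := by
    refine monotoneOn_of_hasDerivWithinAt_nonneg (f' := fun x => f' x - g' x) (convex_Icc a b)
      (fun x hx => (hderiv x hx).continuousAt.continuousWithinAt) (fun x hx => ?_)
      (fun x hx => ?_)
    · rw [interior_Icc] at hx ⊢
      exact (hderiv x (Ioo_subset_Icc_self hx)).hasDerivWithinAt
    · rw [interior_Icc] at hx
      exact sub_nonneg.2 (hle x hx)
  have := hmono (left_mem_Icc.2 hab) (right_mem_Icc.2 hab) hab
  simp only [Pi.sub_apply] at this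
  linarith

lemma mul_log_sub_log_le_sub {y y' : ℝ → ℝ} {a b c : ℝ} (ha : 0 < a) (hab : a ≤ b)
    (hd : ∀ x ∈ Icc a b, HasDerivAt y (y' x) x) (hc : ∀ x ∈ Ioo a b, c ≤ x * y' x) :
    c * (log b - log a) ≤ y b - y a := by
  have := sub_le_sub_of_hasDerivAt_le hab hd
    (fun x hx => (hasDerivAt_log (ha.trans_le hx.1).ne').const_mul c) fun x hx => by
      have hx₀ : 0 < x := ha.trans hx.1
      rw [← div_eq_mul_inv, div_le_iff₀ hx₀, mul_comm]
      exact hc x hx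
  linarith

lemma mul_log_sub_log_le_rpow {y y' : ℝ → ℝ} {a b c p : ℝ} (ha : 0 < a) (hab : a ≤ b)
    (hp : 1 < p) (hpos : ∀ x ∈ Icc a b, 0 < y x) (hd : ∀ x ∈ Icc a b, HasDerivAt y (y' x) x)
    (hc : ∀ x ∈ Ioo a b, c * y x ^ p ≤ x * y' x) :
    c * (log b - log a) ≤ (p - 1)⁻¹ * y a ^ (1 - p) := by
  -- `-(p - 1)⁻¹ * y ^ (1 - p)` is a primitive of `y' / y ^ p`
  have hprim : ∀ x ∈ Icc a b, HasDerivAt (fun x => -((p - 1)⁻¹ * y x ^ (1 - p)))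
      (y' x / y x ^ p) x := by
    intro x hx
    refine (((hd x hx).rpow_const (p := 1 - p) (Or.inl (hpos x hx).ne')).const_mul
      (p - 1)⁻¹).neg.congr_deriv ?_
    rw [show 1 - p - 1 = -p by ring, rpow_neg (hpos x hx).le]
    field_simp [(sub_pos.2 hp).ne']
    ring
  have := sub_le_sub_of_hasDerivAt_le hab hprim
    (fun x hx => (hasDerivAt_log (ha.trans_le hx.1).ne').const_mul c) fun x hx => by
      have hx₀ : 0 < x := ha.trans hx.1
      have hyp : 0 < y x ^ p := rpow_pos_of_pos (hpos x (Ioo_subset_Icc_self hx)) p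
      rw [← div_eq_mul_inv, div_le_div_iff₀ hx₀ hyp, mul_comm (y' x)]
      exact hc x hx
  have hyb : 0 ≤ (p - 1)⁻¹ * y b ^ (1 - p) :=
    mul_nonneg (inv_nonneg.2 (sub_pos.2 hp).le) (rpow_nonneg (hpos b (right_mem_Icc.2 hab)).le _)
  linarith

lemma lt_mul_rpow_neg_of_lt_rpow_inv {a s α θ : ℝ} (ha : 0 < a) (hs : 0 < s) (hα : 0 < α)
    (hθ : 0 < θ) (h : θ < (s / a) ^ α⁻¹) : a < s * θ ^ (-α) := by
  have hθα : θ ^ α < s / a := by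
    simpa [rpow_inv_rpow (div_pos hs ha).le hα.ne'] using rpow_lt_rpow hθ.le h hα
  rw [lt_div_iff₀ ha] at hθα
  rw [rpow_neg hθ.le, ← div_eq_mul_inv, lt_div_iff₀ (rpow_pos_of_pos hθ α)]
  linarith

lemma le_one_of_lifespan_key_inequality {K₁ K₂ p₁ p₂ θ L : ℝ} (hK₁ : 0 < K₁) (hθ : 0 < θ)
    (hL : 0 < L) (hp₁ : 1 < p₁)
    (h : K₂ * (2 * L) ^ (1 - p₂) * L ≤ (p₁ - 1)⁻¹ * (K₁ * θ * L / 2) ^ (1 - p₁)) :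
    (p₁ - 1) * K₂ * 2 ^ (1 - p₂) * (K₁ / 2) ^ (p₁ - 1) * (L ^ (p₁ - p₂ + 1) * θ ^ (p₁ - 1))
      ≤ 1 := by
  have hm : 0 < K₁ / 2 * θ * L := by positivity
  have hp : 0 < p₁ - 1 := sub_pos.2 hp₁
  have hcancel : (K₁ / 2 * θ * L) ^ (1 - p₁) * (K₁ / 2 * θ * L) ^ (p₁ - 1) = 1 := by
    rw [← rpow_add hm, show 1 - p₁ + (p₁ - 1) = 0 by ring, rpow_zero]
  have hL' : L ^ (p₁ - p₂ + 1) = L ^ (1 - p₂) * L * L ^ (p₁ - 1) := by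
    rw [← rpow_add_one hL.ne', ← rpow_add hL]
    congr 1
    ring
  calc _ = (p₁ - 1) * (K₂ * (2 * L) ^ (1 - p₂) * L) * (K₁ / 2 * θ * L) ^ (p₁ - 1) := by
        rw [hL', mul_rpow zero_le_two hL.le, mul_rpow (by positivity) hL.le,
          mul_rpow (by positivity) hθ.le]
        ring
    _ ≤ (p₁ - 1) * ((p₁ - 1)⁻¹ * (K₁ / 2 * θ * L) ^ (1 - p₁)) * (K₁ / 2 * θ * L) ^ (p₁ - 1) := by
        rw [show K₁ * θ * L / 2 = K₁ / 2 * θ * L by ring] at h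
        exact mul_le_mul_of_nonneg_right (mul_le_mul_of_nonneg_left h hp.le) (by positivity)
    _ = (K₁ / 2 * θ * L) ^ (1 - p₁) * (K₁ / 2 * θ * L) ^ (p₁ - 1) := by field_simp
    _ = 1 := hcancel

lemma lifespan_key_inequality {R₀ T K₁ K₂ p₁ p₂ θ L : ℝ} {y y' : ℝ → ℝ} (hR₀ : 1 < R₀)
    (hp₁ : 1 < p₁) (hp₂ : 1 ≤ p₂) (hK₁θ : 0 < K₁ * θ) (hL : 2 * log R₀ ≤ L)
    (hT : exp (2 * L) < T) (hy₀ : 0 ≤ y R₀) (hd : ∀ R ∈ Ico R₀ T, HasDerivAt y (y' R) R)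
    (h1 : ∀ R ∈ Ioo R₀ T, K₁ * θ ≤ R * y' R)
    (h2 : ∀ R ∈ Ioo R₀ T, K₂ * y R ^ p₁ ≤ R * log R ^ (p₂ - 1) * y' R) :
    K₂ * (2 * L) ^ (1 - p₂) * L ≤ (p₁ - 1)⁻¹ * (K₁ * θ * L / 2) ^ (1 - p₁) := by
  have hR₀pos : 0 < R₀ := by linarith
  have hlogR₀ : 0 < log R₀ := log_pos hR₀
  have hL₀ : 0 < L := by linarith
  have hR₀_le_exp : R₀ ≤ exp L := by
    rw [← exp_log hR₀pos]
    exact exp_le_exp.2 (by linarith)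
  have hexp_le_exp : exp L ≤ exp (2 * L) := exp_le_exp.2 (by linarith)
  have hgrowth : ∀ R ∈ Icc (exp L) (exp (2 * L)), K₁ * θ * L / 2 ≤ y R := by
    intro R hR
    have hRT : R < T := hR.2.trans_lt hT
    have hlogR : L ≤ log R := by
      rw [← log_exp L]
      exact log_le_log (exp_pos L) hR.1
    have hinc := mul_log_sub_log_le_sub hR₀pos (hR₀_le_exp.trans hR.1)
      (fun x hx => hd x ⟨hx.1, hx.2.trans_lt hRT⟩) (fun x hx => h1 x ⟨hx.1, hx.2.trans hRT⟩)
    have := mul_le_mul_of_nonneg_left (show L / 2 ≤ log R - log R₀ by linarith) hK₁θ.le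
    linarith
  have hsuper : ∀ R ∈ Ioo (exp L) (exp (2 * L)),
      K₂ * (2 * L) ^ (1 - p₂) * y R ^ p₁ ≤ R * y' R := by
    intro R hR
    have hRmem : R ∈ Ioo R₀ T := ⟨hR₀_le_exp.trans_lt hR.1, hR.2.trans hT⟩
    have hRpos : 0 < R := hR₀pos.trans hRmem.1
    have hlogR : L ≤ log R := by
      rw [← log_exp L]
      exact log_le_log (exp_pos L) hR.1.le
    have hlogS : log R ≤ 2 * L := by
      rw [← log_exp (2 * L)]
      exact log_le_log hRpos hR.2.le
    have hpow : log R ^ (p₂ - 1) ≤ (2 * L) ^ (p₂ - 1) :=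
      rpow_le_rpow (by linarith) hlogS (by linarith)
    have hRy' : 0 ≤ R * y' R := hK₁θ.le.trans (h1 R hRmem)
    have hM : 0 < (2 * L) ^ (p₂ - 1) := by positivity
    have hle : K₂ * y R ^ p₁ ≤ (2 * L) ^ (p₂ - 1) * (R * y' R) :=
      calc K₂ * y R ^ p₁ ≤ log R ^ (p₂ - 1) * (R * y' R) := by linarith [h2 R hRmem]
        _ ≤ _ := mul_le_mul_of_nonneg_right hpow hRy'
    rw [show 1 - p₂ = -(p₂ - 1) by ring, rpow_neg (by positivity), mul_right_comm,
      ← div_eq_mul_inv, div_le_iff₀ hM, mul_comm (R * y' R)]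
    exact hle
  have hm : 0 < K₁ * θ * L / 2 := by positivity
  have hsmall := mul_log_sub_log_le_rpow (exp_pos L) hexp_le_exp hp₁
    (fun x hx => hm.trans_le (hgrowth x hx))
    (fun x hx => hd x ⟨hR₀_le_exp.trans hx.1, hx.2.trans_lt hT⟩) hsuper
  rw [log_exp, log_exp, show 2 * L - L = L by ring] at hsmall
  calc _ ≤ (p₁ - 1)⁻¹ * y (exp L) ^ (1 - p₁) := hsmall
    _ ≤ _ := mul_le_mul_of_nonneg_left
      (rpow_le_rpow_of_nonpos hm (hgrowth _ (left_mem_Icc.2 hexp_le_exp)) (by linarith))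
      (inv_nonneg.2 (by linarith))

theorem stmt_19 (R₀ K₁ K₂ p₁ p₂ : ℝ) (hR₀ : 2 < R₀)
    (hK₁ : 0 < K₁) (hK₂ : 0 < K₂) (hp₁ : 1 < p₁) (hp₂ : 1 ≤ p₂)
    (hpp : p₂ < p₁ + 1) :
    ∃ θ₀ : ℝ, 0 < θ₀ ∧ ∃ K : ℝ, 0 < K ∧
      ∀ T : ℝ, R₀ < T →
      ∀ θ : ℝ, 0 < θ → θ < θ₀ →
      ∀ y y' : ℝ → ℝ,
        (∀ R ∈ Set.Ico R₀ T, 0 ≤ y R) →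
        (∀ R ∈ Set.Ico R₀ T, HasDerivAt y (y' R) R) →
        ContinuousOn y' (Set.Ico R₀ T) →
        (∀ R ∈ Set.Ioo R₀ T, K₁ * θ ≤ R * y' R) →
        (∀ R ∈ Set.Ioo R₀ T, K₂ * (y R) ^ p₁ ≤ R * (Real.log R) ^ (p₂ - 1) * y' R) →
        T ≤ Real.exp (K * θ ^ (-(p₁ - 1) / (p₁ - p₂ + 1))) := by
  have hq : 0 < p₁ - p₂ + 1 := by linarith
  set α := (p₁ - 1) / (p₁ - p₂ + 1) with hα_def
  have hα : 0 < α := div_pos (by linarith) hq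
  set c₀ := (p₁ - 1) * K₂ * 2 ^ (1 - p₂) * (K₁ / 2) ^ (p₁ - 1)
  have hc₀ : 0 < c₀ := by have := sub_pos.2 hp₁; positivity
  obtain ⟨s, hs_big, hs⟩ : ∃ s, 1 < c₀ * s ^ (p₁ - p₂ + 1) ∧ 0 < s :=
    ((((tendsto_rpow_atTop hq).const_mul_atTop hc₀).eventually_gt_atTop 1).and
      (eventually_gt_atTop 0)).exists
  have hlogR₀ : 0 < log R₀ := log_pos (by linarith)
  refine ⟨(s / (2 * log R₀)) ^ α⁻¹, by positivity, 2 * s, by positivity, ?_⟩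
  intro T hT θ hθ hθθ₀ y y' hy hd _ h1 h2
  by_contra! hTbig
  have hL := lt_mul_rpow_neg_of_lt_rpow_inv (by positivity) hs hα hθ hθθ₀
  have hkey := lifespan_key_inequality (by linarith) hp₁ hp₂ (mul_pos hK₁ hθ) hL.le
    (by rwa [neg_div, ← hα_def, mul_assoc] at hTbig) (hy R₀ ⟨le_rfl, hT⟩) hd h1 h2
  have hscale : (s * θ ^ (-α)) ^ (p₁ - p₂ + 1) * θ ^ (p₁ - 1) = s ^ (p₁ - p₂ + 1) := by
    rw [mul_rpow hs.le (by positivity), ← rpow_mul hθ.le, neg_mul, hα_def,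
      div_mul_cancel₀ _ hq.ne', rpow_neg hθ.le, mul_assoc, inv_mul_cancel₀ (by positivity),
      mul_one]
  have := le_one_of_lifespan_key_inequality hK₁ hθ (by positivity) hp₁ hkey
  rw [hscale] at this
  linarith
end
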